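/- Let n = 2·n_e be even and let H_n be the n×n tridiagonal matrix with zero diagonal entries and all sub- and super-diagonal entries equal to 1/2. Let P_n be the spectral projector of H_n associated with the interval [−1,0) (equivalently, the orthogonal projector onto the span of the eigenvectors corresponding to the n_e negative eigenvalues of H_n). Then every diagonal entry of P_n equals 1/2: [P_n]_{ii} = 1/2 for all i = 1,…,n. Equivalently, since the normalized eigenvectors of H_n are v_k(j) = √(2/(n+1))·sin(jkπ/(n+1)) with eigenvalues cos(kπ/(n+1)) in descending order, one has (2/(n+1))·Σ_{k=1}^{n/2} sin²(ikπ/(n+1)) = 1/2 for every i = 1,…,n. -/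

import Mathlib

/-!
Conjugation by `D = diag((-1)^j)` maps `H_n` to `-H_n`, because `H_n` only couples neighbouring
indices. For even `n` the matrix `H_n` is invertible: a kernel vector satisfies `w_{j+2} = -w_j`
with zero boundary values at both ends, which kills the even and the odd entries separately.
Hence the indicator `χ` of `(-∞, 0)` is continuous on the spectrum and `χ(-x) = 1 - χ(x)` there,
so `D P D = χ(-H_n) = 1 - P`. As `D` is diagonal with entries `±1`, this gives `P_ii = 1 - P_ii`.

The trigonometric identity reduces, via `sin² x = (1 - cos 2x) / 2`, to
`∑_{k=1}^{m} cos (2kα) = -1/2` for `α = iπ/(2m+1)`, a Dirichlet-kernel sum.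
-/

/-- The `N×N` tridiagonal matrix with zero diagonal and `1/2` on the first sub- and
super-diagonals. -/
noncomputable def trid (N : ℕ) : Matrix (Fin N) (Fin N) ℂ :=
  fun p q => if |(p : ℤ) - (q : ℤ)| = 1 then (1 / 2 : ℂ) else 0

lemma trid_isHermitian (N : ℕ) : (trid N).IsHermitian := by
  ext p q
  simp only [Matrix.conjTranspose_apply, trid]
  rw [abs_sub_comm]
  split <;> simp

open Matrix Finset Real

section FunctionalCalculus

lemma continuousOn_indicator_Iio_one {s : Set ℝ} (hs : (0 : ℝ) ∉ s) :
    ContinuousOn ((Set.Iio (0 : ℝ)).indicator (1 : ℝ → ℝ)) s := by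
  rw [← Set.piecewise_eq_indicator]
  refine ContinuousOn.piecewise (fun x hx => ?_) continuousOn_const continuousOn_const
  rw [frontier_Iio] at hx
  exact absurd (hx.2 ▸ hx.1) hs

variable {A : Type*} [Ring A] [StarRing A] [TopologicalSpace A] [Algebra ℝ A]
  [ContinuousFunctionalCalculus ℝ A IsSelfAdjoint] [ContinuousMap.UniqueHom ℝ A]

lemma cfc_indicator_Iio_neg {a : A} (ha : IsSelfAdjoint a) (hu : IsUnit a) :
    cfc ((Set.Iio (0 : ℝ)).indicator 1) (-a) = 1 - cfc ((Set.Iio (0 : ℝ)).indicator 1) a := by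
  have h0 : (0 : ℝ) ∉ spectrum ℝ a := (spectrum.zero_notMem_iff ℝ).mpr hu
  rw [← cfc_comp_neg _ a (continuousOn_indicator_Iio_one (by simpa using h0)),
    ← cfc_const_one ℝ a,
    ← cfc_sub _ _ a (hf := continuousOn_const) (hg := continuousOn_indicator_Iio_one h0)]
  refine cfc_congr fun x hx => ?_
  rcases (show x ≠ 0 from fun h => h0 (h ▸ hx)).lt_or_gt with h | h <;> simp [h, h.le]

lemma cfc_unitary_conj [ContinuousMul A] (u : unitary A) (f : ℝ → ℝ) {a : A} (ha : IsSelfAdjoint a)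
    (hf : ContinuousOn f (spectrum ℝ a) := by cfc_cont_tac) :
    cfc f ((u : A) * a * star (u : A)) = u * cfc f a * star (u : A) :=
  (StarAlgHomClass.map_cfc (Unitary.conjStarAlgAut ℝ A u) f a hf
    ((continuous_const_mul (u : A)).mul_const _) ha (ha.conjugate _)).symm

lemma unitary_conj_cfc_indicator_Iio_of_conj_eq_neg [ContinuousMul A]
    (u : unitary A) {a : A} (ha : IsSelfAdjoint a) (hu : IsUnit a)
    (hua : (u : A) * a * star (u : A) = -a) :
    u * cfc ((Set.Iio (0 : ℝ)).indicator 1) a * star (u : A) =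
      1 - cfc ((Set.Iio (0 : ℝ)).indicator 1) a := by
  have h0 : (0 : ℝ) ∉ spectrum ℝ a := (spectrum.zero_notMem_iff ℝ).mpr hu
  rw [← cfc_unitary_conj u _ ha (continuousOn_indicator_Iio_one h0), hua,
    cfc_indicator_Iio_neg ha hu]

end FunctionalCalculus

section Invertibility

lemma eq_zero_of_add_add_two_eq_zero {G : Type*} [AddGroup G] {n : ℕ} (hn : Even n)
    {u : ℕ → G} (h : ∀ m < n, u m + u (m + 2) = 0) (h₀ : u 0 = 0) (hlast : u (n + 1) = 0)
    {m : ℕ} (hm : m ≤ n + 1) : u m = 0 := by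
  have h_even : ∀ t, 2 * t ≤ n → u (2 * t) = 0 := by
    intro t
    induction t with
    | zero => simpa using h₀
    | succ t ih =>
      intro ht
      rw [mul_add, mul_one, eq_neg_of_add_eq_zero_right (h (2 * t) (by omega)), ih (by omega),
        neg_zero]
  have h_odd : ∀ t, 2 * t ≤ n → u (n + 1 - 2 * t) = 0 := by
    intro t
    induction t with
    | zero => simpa using hlast
    | succ t ih =>
      intro ht
      have := h (n + 1 - 2 * (t + 1)) (by omega)
      rw [show n + 1 - 2 * (t + 1) + 2 = n + 1 - 2 * t by omega, ih (by omega)] at this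
      simpa using this
  obtain ⟨k, hk⟩ := hn
  rcases Nat.even_or_odd m with ⟨t, rfl⟩ | ⟨t, rfl⟩
  · simpa [two_mul] using h_even t (by omega)
  · simpa [show n + 1 - 2 * (k - t) = 2 * t + 1 by omega] using h_odd (k - t) (by omega)

section ShiftPad

variable {R : Type*} [AddCommMonoid R] {n : ℕ}

/-- The sequence `0, w 0, …, w (n - 1), 0, 0, …`. -/
def shiftPad (w : Fin n → R) (m : ℕ) : R :=
  ∑ q : Fin n, if (q : ℕ) + 1 = m then w q else 0

lemma shiftPad_zero (w : Fin n → R) : shiftPad w 0 = 0 := by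
  simp [shiftPad]

lemma shiftPad_of_lt {w : Fin n → R} {m : ℕ} (hm : n < m) : shiftPad w m = 0 :=
  sum_eq_zero fun q _ => if_neg (by omega)

lemma shiftPad_succ (w : Fin n → R) (q : Fin n) : shiftPad w (q + 1) = w q := by
  simp [shiftPad, Fin.val_inj]

end ShiftPad

variable {n : ℕ}

lemma trid_apply (p q : Fin n) :
    trid n p q =
      (if (q : ℕ) + 1 = p then 1 / 2 else 0) + (if (p : ℕ) + 1 = q then 1 / 2 else 0) := by
  simp only [trid, abs_eq zero_le_one]
  split_ifs <;> first | omega | norm_num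

lemma trid_mulVec_apply (w : Fin n → ℂ) (j : Fin n) :
    (trid n *ᵥ w) j = (shiftPad w j + shiftPad w (j + 2)) / 2 := by
  simp only [mulVec, dotProduct, trid_apply, add_mul, sum_add_distrib, shiftPad, add_div,
    sum_div]
  congr 1 <;> refine sum_congr rfl fun q _ => ?_ <;> split_ifs <;> first | omega | ring

lemma trid_mulVec_eq_zero (hn : Even n) {w : Fin n → ℂ} (hw : trid n *ᵥ w = 0) : w = 0 := by
  have hrec : ∀ m < n, shiftPad w m + shiftPad w (m + 2) = 0 := fun m hm => by
    simpa [trid_mulVec_apply] using congrFun hw ⟨m, hm⟩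
  funext q
  rw [← shiftPad_succ w q]
  exact eq_zero_of_add_add_two_eq_zero hn hrec (shiftPad_zero w) (shiftPad_of_lt (by omega))
    (by omega)

lemma isUnit_trid (hn : Even n) : IsUnit (trid n) := by
  rw [isUnit_iff_isUnit_det, isUnit_iff_ne_zero, Ne, ← exists_mulVec_eq_zero_iff]
  rintro ⟨w, hw0, hw⟩
  exact hw0 (trid_mulVec_eq_zero hn hw)

end Invertibility

section SignFlip

def signDiag (n : ℕ) : Matrix (Fin n) (Fin n) ℂ :=
  diagonal fun j => (-1) ^ (j : ℕ)

variable {n : ℕ}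

lemma star_signDiag : star (signDiag n) = signDiag n := by
  simp [signDiag, star_eq_conjTranspose, diagonal_conjTranspose, Pi.star_def]

lemma signDiag_mul_self : signDiag n * signDiag n = 1 := by
  simp [signDiag, diagonal_mul_diagonal, ← mul_pow]

lemma signDiag_mem_unitary : signDiag n ∈ unitary (Matrix (Fin n) (Fin n) ℂ) :=
  Unitary.mem_iff.mpr
    ⟨by rw [star_signDiag, signDiag_mul_self], by rw [star_signDiag, signDiag_mul_self]⟩

lemma signDiag_conj_apply (M : Matrix (Fin n) (Fin n) ℂ) (p q : Fin n) :
    (signDiag n * M * star (signDiag n)) p q = (-1) ^ ((p : ℕ) + q) * M p q := by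
  rw [star_signDiag, signDiag, mul_diagonal, diagonal_mul, pow_add]
  ring

lemma signDiag_conj_apply_self (M : Matrix (Fin n) (Fin n) ℂ) (i : Fin n) :
    (signDiag n * M * star (signDiag n)) i i = M i i := by
  rw [signDiag_conj_apply, ← two_mul, (even_two_mul _).neg_one_pow, one_mul]

lemma signDiag_conj_trid : signDiag n * trid n * star (signDiag n) = -trid n := by
  ext p q
  rw [signDiag_conj_apply, trid_apply, neg_apply, trid_apply]
  split_ifs with h₁ h₂ h₂
  · omega
  · rw [← h₁, Odd.neg_one_pow ⟨q, by ring⟩]; ring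
  · rw [← h₂, Odd.neg_one_pow ⟨p, by ring⟩]; ring
  · ring

end SignFlip

section Trigonometry

lemma sum_Icc_cos_two_mul_mul (m : ℕ) {α : ℝ} (hα : sin ((2 * m + 1) * α) = 0)
    (hsin : sin α ≠ 0) : ∑ k ∈ Icc 1 m, cos (2 * k * α) = -1 / 2 := by
  have h := sin_mul_sum_cos m (2 * α) (2 * α)
  rw [← Ico_add_one_right_eq_Icc, sum_Ico_eq_sum_range, Nat.add_sub_cancel]
  apply mul_left_cancel₀ hsin
  calc sin α * ∑ k ∈ range m, cos (2 * ((1 + k : ℕ) : ℝ) * α)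
      = sin (m * α) * cos ((m + 1) * α) := by
        convert h using 3 <;> push_cast <;> ring_nf
    _ = (sin ((2 * m + 1) * α) - sin α) / 2 := by
        rw [eq_div_iff two_ne_zero, mul_comm _ 2, ← mul_assoc, two_mul_sin_mul_cos]
        ring_nf
        rw [sin_neg]; ring
    _ = sin α * (-1 / 2) := by rw [hα]; ring

lemma sum_Icc_sin_sq_mul_pi_div (m i : ℕ) (hi₀ : 0 < i) (hi : i ≤ 2 * m) :
    ∑ k ∈ Icc 1 m, sin (i * k * π / (2 * m + 1)) ^ 2 = (2 * m + 1) / 4 := by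
  set α := i * π / (2 * m + 1) with hα_def
  have hden : (0 : ℝ) < 2 * m + 1 := by positivity
  have hα_pos : 0 < α := by positivity
  have hα_lt : α < π := by
    rw [div_lt_iff₀ hden]
    have : (i : ℝ) < 2 * m + 1 := by exact_mod_cast Nat.lt_succ_of_le hi
    nlinarith [pi_pos]
  have hα : sin ((2 * m + 1) * α) = 0 := by
    rw [hα_def, mul_div_cancel₀ _ hden.ne']
    exact sin_nat_mul_pi i
  have hcos := sum_Icc_cos_two_mul_mul m hα (sin_pos_of_pos_of_lt_pi hα_pos hα_lt).ne'
  calc ∑ k ∈ Icc 1 m, sin (i * k * π / (2 * m + 1)) ^ 2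
      = ∑ k ∈ Icc 1 m, (1 / 2 - cos (2 * k * α) / 2) := by
        refine sum_congr rfl fun k _ => ?_
        rw [sin_sq_eq_half_sub, hα_def]
        ring_nf
    _ = (2 * m + 1) / 4 := by
        rw [sum_sub_distrib, ← sum_div, ← sum_div, hcos, sum_const, Nat.card_Icc,
          Nat.add_sub_cancel, nsmul_eq_mul, mul_one]
        ring

end Trigonometry

/-- Let `n = 2·n_e` be even, `H_n` the tridiagonal matrix with zero diagonal and `1/2` on
the sub- and super-diagonals, and `P_n` the spectral projector of `H_n` associated with
`[−1,0)` (the projector onto the span of the eigenvectors for the `n_e` negative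
eigenvalues). Then `[P_n]_{ii} = 1/2` for all `i`; equivalently,
`(2/(n+1))·Σ_{k=1}^{n/2} sin²(ikπ/(n+1)) = 1/2` for every `i = 1,…,n`. -/
theorem stmt_15 (n_e n : ℕ) (hn : n = 2 * n_e)
    (P : Matrix (Fin n) (Fin n) ℂ)
    (hP : P = ((trid_isHermitian n).eigenvectorUnitary : Matrix (Fin n) (Fin n) ℂ) *
        Matrix.diagonal
          (fun k : Fin n => if (trid_isHermitian n).eigenvalues k < 0 then (1 : ℂ) else 0) *
        star ((trid_isHermitian n).eigenvectorUnitary : Matrix (Fin n) (Fin n) ℂ)) :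
    (∀ i : Fin n, P i i = (1 / 2 : ℂ)) ∧
    (∀ i : ℕ, 1 ≤ i → i ≤ n →
      (2 / ((n : ℝ) + 1)) *
        ∑ k ∈ Finset.Icc 1 n_e,
          Real.sin ((i : ℝ) * (k : ℝ) * Real.pi / ((n : ℝ) + 1)) ^ 2 = 1 / 2) := by
  refine ⟨fun i => ?_, fun i hi₀ hi => ?_⟩
  · have hH := trid_isHermitian n
    have hP_cfc : P = cfc ((Set.Iio (0 : ℝ)).indicator 1) (trid n) := by
      rw [hH.cfc_eq, IsHermitian.cfc, Unitary.conjStarAlgAut_apply, hP]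
      congr
      funext k
      by_cases hk : hH.eigenvalues k < 0 <;> simp [hk]
    have hflip : signDiag n * P * star (signDiag n) = 1 - P := by
      rw [hP_cfc]
      exact unitary_conj_cfc_indicator_Iio_of_conj_eq_neg ⟨_, signDiag_mem_unitary⟩
        hH.isSelfAdjoint (isUnit_trid ⟨n_e, by omega⟩) signDiag_conj_trid
    have hii := congrFun (congrFun hflip i) i
    rw [signDiag_conj_apply_self, Matrix.sub_apply, one_apply_eq] at hii
    linear_combination hii / 2
  · subst hn
    push_cast
    rw [sum_Icc_sin_sq_mul_pi_div n_e i hi₀ hi]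
    field_simp
    norm_num
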